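/- arXiv:1011.3976 — 6 statements merged into one kernel-verified Lean document; each statement's English description precedes it below -/
import Mathlib

section
/- Let X be a compact metric space and Λ : C(X) → ℝ a concave functional such that at every u ∈ C(X), Λ is Gateaux differentiable with differential represented by a Borel probability measure on X (i.e. for each u there is a Borel probability measure μ_u with d/dt Λ(u + t·v)|_{t=0} = ∫_X v dμ_u for all v ∈ C(X)). Then for every u ∈ C(X), the infimum over Borel probability measures μ on X of Λ*(μ) + ∫_X u dμ coincides with the infimum of the same expression taken over all finite signed Borel measures, and both infima are attained and equal Λ(u). -/
/-!
At the point `u`, the measure `μ_u` representing the differential of `Λ` is a supergradient: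
concavity along the segment from `u` to `w` gives `Λ w ≤ Λ u + ⟨w - u, μ_u⟩`, i.e. the supremum
defining `Λ*(μ_u)` is attained at `w = u`, so `Λ*(μ_u) + ⟨u, μ_u⟩ = Λ u`. Conversely the
Fenchel–Young inequality `Λ u ≤ Λ*(ν) + ⟨u, ν⟩` holds for every signed measure `ν`, so `μ_u`
realises both infima.
-/

open MeasureTheory

/-- Integration of a real function against a finite signed Borel measure,
via the Jordan decomposition. -/
noncomputable def sIntegral {X : Type*} [MeasurableSpace X]
    (μ : SignedMeasure X) (f : X → ℝ) : ℝ :=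
  ∫ x, f x ∂μ.toJordanDecomposition.posPart -
    ∫ x, f x ∂μ.toJordanDecomposition.negPart

/-- The Legendre–Fenchel transform `Λ*(μ) = sup_{w ∈ C(X)} (Λ(w) − ⟨w, μ⟩)`,
with values in `(−∞, +∞]` (realized inside `EReal`). -/
noncomputable def legendreStar {X : Type*} [TopologicalSpace X] [MeasurableSpace X]
    (Λ : C(X, ℝ) → ℝ) (μ : SignedMeasure X) : EReal :=
  ⨆ w : C(X, ℝ), ((Λ w - sIntegral μ ⇑w : ℝ) : EReal)

open Set

lemma sIntegral_toSignedMeasure {X : Type*} [MeasurableSpace X]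
    (μ : Measure X) [IsFiniteMeasure μ] (f : X → ℝ) :
    sIntegral μ.toSignedMeasure f = ∫ x, f x ∂μ := by
  have hJ : μ.toSignedMeasure.toJordanDecomposition =
      ⟨μ, 0, Measure.MutuallySingular.zero_right⟩ := by
    rw [← JordanDecomposition.toJordanDecomposition_toSignedMeasure
      ⟨μ, 0, Measure.MutuallySingular.zero_right⟩]
    simp [JordanDecomposition.toSignedMeasure]
  simp [sIntegral, hJ]

lemma ConcaveOn.le_add_of_hasDerivAt_lineMap {E : Type*} [AddCommGroup E] [Module ℝ E]
    {f : E → ℝ} (hf : ConcaveOn ℝ univ f) {u w : E} {d : ℝ}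
    (hd : HasDerivAt (fun t : ℝ => f (u + t • (w - u))) d 0) :
    f w ≤ f u + d := by
  have hline : ConcaveOn ℝ univ (fun t : ℝ => f (u + t • (w - u))) := by
    have hcomp : ConcaveOn ℝ univ (f ∘ AffineMap.lineMap (k := ℝ) u w) := by
      simpa using hf.comp_affineMap (AffineMap.lineMap (k := ℝ) u w)
    convert hcomp using 2 with t
    simp [AffineMap.lineMap_apply_module', add_comm]
  have hslope := hline.slope_le_of_hasDerivAt (mem_univ 0) (mem_univ 1) zero_lt_one hd
  simp only [slope_def_field, sub_zero, div_one, one_smul, zero_smul, add_zero,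
    add_sub_cancel] at hslope
  linarith

lemma coe_le_legendreStar_add_sIntegral {X : Type*} [TopologicalSpace X] [MeasurableSpace X]
    (Λ : C(X, ℝ) → ℝ) (ν : SignedMeasure X) (u : C(X, ℝ)) :
    ((Λ u : ℝ) : EReal) ≤ legendreStar Λ ν + ((sIntegral ν ⇑u : ℝ) : EReal) := by
  have hsup : ((Λ u - sIntegral ν ⇑u : ℝ) : EReal) ≤ legendreStar Λ ν :=
    le_iSup (fun w : C(X, ℝ) => ((Λ w - sIntegral ν ⇑w : ℝ) : EReal)) u
  calc ((Λ u : ℝ) : EReal)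
      = ((Λ u - sIntegral ν ⇑u : ℝ) : EReal) + ((sIntegral ν ⇑u : ℝ) : EReal) := by
        rw [← EReal.coe_add, sub_add_cancel]
    _ ≤ legendreStar Λ ν + ((sIntegral ν ⇑u : ℝ) : EReal) := by gcongr

lemma legendreStar_add_sIntegral_eq_of_forall_le {X : Type*} [TopologicalSpace X]
    [MeasurableSpace X] {Λ : C(X, ℝ) → ℝ} {ν : SignedMeasure X} {u : C(X, ℝ)}
    (hmax : ∀ w : C(X, ℝ), Λ w - sIntegral ν ⇑w ≤ Λ u - sIntegral ν ⇑u) :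
    legendreStar Λ ν + ((sIntegral ν ⇑u : ℝ) : EReal) = ((Λ u : ℝ) : EReal) := by
  have hstar : legendreStar Λ ν = ((Λ u - sIntegral ν ⇑u : ℝ) : EReal) :=
    le_antisymm (iSup_le fun w => EReal.coe_le_coe_iff.2 (hmax w))
      (le_iSup (fun w : C(X, ℝ) => ((Λ w - sIntegral ν ⇑w : ℝ) : EReal)) u)
  rw [hstar, ← EReal.coe_add, sub_add_cancel]

lemma legendreStar_add_integral_eq_of_hasDerivAt {X : Type*} [TopologicalSpace X]
    [CompactSpace X] [MeasurableSpace X] [OpensMeasurableSpace X]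
    {Λ : C(X, ℝ) → ℝ} (hconc : ConcaveOn ℝ univ Λ) {u : C(X, ℝ)}
    {μ : Measure X} [IsFiniteMeasure μ]
    (hder : ∀ v : C(X, ℝ), HasDerivAt (fun t : ℝ => Λ (u + t • v)) (∫ x, v x ∂μ) 0) :
    legendreStar Λ μ.toSignedMeasure + ((∫ x, u x ∂μ : ℝ) : EReal) = ((Λ u : ℝ) : EReal) := by
  have hint (f : C(X, ℝ)) : Integrable (⇑f) μ :=
    f.continuous.integrable_of_hasCompactSupport (HasCompactSupport.of_compactSpace f)
  rw [← sIntegral_toSignedMeasure]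
  refine legendreStar_add_sIntegral_eq_of_forall_le fun w => ?_
  have hsuper := hconc.le_add_of_hasDerivAt_lineMap (hder (w - u))
  simp only [ContinuousMap.sub_apply] at hsuper
  rw [integral_sub (hint w) (hint u)] at hsuper
  simp only [sIntegral_toSignedMeasure]
  linarith

/-- If `Λ : C(X) → ℝ` is concave and at every point Gateaux differentiable with
differential represented by a Borel probability measure, then for every `u ∈ C(X)`
the infimum of `μ ↦ Λ*(μ) + ⟨u, μ⟩` over Borel probability measures coincides with
the infimum over all finite signed Borel measures; both infima are attained and both
equal `Λ(u)`. -/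
theorem legendre_inf_over_probability_eq_inf_over_signed
    {X : Type*} [MetricSpace X] [CompactSpace X]
    [MeasurableSpace X] [BorelSpace X]
    (Λ : C(X, ℝ) → ℝ) (hconc : ConcaveOn ℝ Set.univ Λ)
    (hdiff : ∀ u : C(X, ℝ), ∃ μu : Measure X, IsProbabilityMeasure μu ∧
      ∀ v : C(X, ℝ), HasDerivAt (fun t : ℝ => Λ (u + t • v)) (∫ x, v x ∂μu) 0)
    (u : C(X, ℝ)) :
    (⨅ P : ProbabilityMeasure X,
        legendreStar Λ ((P : Measure X).toSignedMeasure) +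
          ((∫ x, u x ∂(P : Measure X) : ℝ) : EReal)) = ((Λ u : ℝ) : EReal) ∧
    (⨅ ν : SignedMeasure X,
        legendreStar Λ ν + ((sIntegral ν ⇑u : ℝ) : EReal)) = ((Λ u : ℝ) : EReal) ∧
    (∃ P : ProbabilityMeasure X,
        legendreStar Λ ((P : Measure X).toSignedMeasure) +
          ((∫ x, u x ∂(P : Measure X) : ℝ) : EReal) = ((Λ u : ℝ) : EReal)) ∧
    (∃ ν : SignedMeasure X,
        legendreStar Λ ν + ((sIntegral ν ⇑u : ℝ) : EReal) = ((Λ u : ℝ) : EReal)) := by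
  obtain ⟨μ, hμ, hder⟩ := hdiff u
  let P : ProbabilityMeasure X := ⟨μ, hμ⟩
  have hP : legendreStar Λ ((P : Measure X).toSignedMeasure) +
      ((∫ x, u x ∂(P : Measure X) : ℝ) : EReal) = ((Λ u : ℝ) : EReal) :=
    legendreStar_add_integral_eq_of_hasDerivAt hconc hder
  have hν : legendreStar Λ μ.toSignedMeasure +
      ((sIntegral μ.toSignedMeasure ⇑u : ℝ) : EReal) = ((Λ u : ℝ) : EReal) := by
    rw [sIntegral_toSignedMeasure]
    exact hP
  refine ⟨le_antisymm (iInf_le_of_le P hP.le) (le_iInf fun Q => ?_),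
    le_antisymm (iInf_le_of_le _ hν.le) (le_iInf fun ν => coe_le_legendreStar_add_sIntegral Λ ν u),
    ⟨P, hP⟩, ⟨_, hν⟩⟩
  simpa only [sIntegral_toSignedMeasure] using
    coe_le_legendreStar_add_sIntegral Λ (Q : Measure X).toSignedMeasure u
end

section
/- Let μ₀ be a probability measure on a measurable space X, and let μ⁰, μ¹ be probability measures on X which are absolutely continuous with respect to μ₀, with densities f₀ = dμ⁰/dμ₀ and f₁ = dμ¹/dμ₀, and with finite relative entropies D_{μ₀}(μ⁰) < ∞ and D_{μ₀}(μ¹) < ∞. Assume that f₁ = 0 holds μ₀-almost everywhere on the set {f₀ = 0}, and that the function (f₁ − f₀)·log f₀ is μ₀-integrable. For t ∈ [0,1] set μ^t := (1−t)·μ⁰ + t·μ¹. Then the right derivative at t = 0 of the (convex) function t ↦ D_{μ₀}(μ^t) exists and equals ∫_X (f₁ − f₀)·log f₀ dμ₀. -/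
open MeasureTheory Set Filter Topology

/-!
For each `x`, the map `t ↦ φ((1 - t) f₀ x + t f₁ x)` with `φ u = u log u` is convex on `[0, 1]`, so
its difference quotients at `0` lie between its derivative `(f₁ x - f₀ x) (log f₀ x + 1)` at `0`
and its increment `φ (f₁ x) - φ (f₀ x)`. Where `f₀ x = 0` the map is constant, since `f₁ x = 0`
there. Both bounds are integrable, so dominated convergence differentiates under the integral,
and the extra term `∫ (f₁ - f₀)` vanishes because both densities have mass one.
-/

theorem hasDerivWithinAt_integral_Ici_of_dominated_slope {X E : Type*} [MeasurableSpace X]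
    {μ : Measure X} [NormedAddCommGroup E] [NormedSpace ℝ E] {F : ℝ → X → E} {F' : X → E}
    {bound : X → ℝ} {a : ℝ}
    (hF_meas : ∀ᶠ t in 𝓝[>] a, AEStronglyMeasurable (F t) μ) (hF_int : Integrable (F a) μ)
    (h_bound : ∀ᶠ t in 𝓝[>] a, ∀ᵐ x ∂μ, ‖slope (F · x) a t‖ ≤ bound x)
    (bound_integrable : Integrable bound μ)
    (h_diff : ∀ᵐ x ∂μ, HasDerivWithinAt (F · x) (F' x) (Ioi a) a) :
    HasDerivWithinAt (fun t => ∫ x, F t x ∂μ) (∫ x, F' x ∂μ) (Ici a) a := by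
  have h_slope_meas : ∀ᶠ t in 𝓝[>] a,
      AEStronglyMeasurable (fun x => slope (F · x) a t) μ := by
    filter_upwards [hF_meas] with t ht
    simp only [slope_def_module]
    exact (ht.sub hF_int.1).const_smul _
  have h_lim : Tendsto (fun t => ∫ x, slope (F · x) a t ∂μ) (𝓝[>] a) (𝓝 (∫ x, F' x ∂μ)) :=
    tendsto_integral_filter_of_dominated_convergence bound h_slope_meas h_bound bound_integrable
      (h_diff.mono fun x hx => (hasDerivWithinAt_iff_tendsto_slope' self_notMem_Ioi).mp hx)
  rw [← hasDerivWithinAt_Ioi_iff_Ici, hasDerivWithinAt_iff_tendsto_slope' self_notMem_Ioi]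
  refine h_lim.congr' ?_
  filter_upwards [h_slope_meas, h_bound, self_mem_nhdsWithin] with t hm hb (ht : a < t)
  have h_slope_int : Integrable (fun x => slope (F · x) a t) μ :=
    bound_integrable.mono' hm hb
  have hFt : ∫ x, F t x ∂μ = ∫ x, F a x ∂μ + (t - a) • ∫ x, slope (F · x) a t ∂μ := by
    rw [← integral_smul, ← integral_add hF_int (h_slope_int.fun_smul (t - a))]
    simp only [sub_smul_slope, vsub_eq_sub, add_sub_cancel]
  rw [slope_def_module, hFt, add_sub_cancel_left, inv_smul_smul₀ (sub_ne_zero.mpr ht.ne')]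

namespace Real

variable {a b : ℝ}

theorem convexOn_mul_log_segment (ha : 0 ≤ a) (hb : 0 ≤ b) :
    ConvexOn ℝ (Icc 0 1) fun t => ((1 - t) * a + t * b) * log ((1 - t) * a + t * b) := by
  have h := (convexOn_mul_log.comp_affineMap (AffineMap.lineMap a b)).subset
    (fun t ht => ?_) (convex_Icc 0 1)
  · simpa only [Function.comp_def, AffineMap.lineMap_apply_ring] using h
  · simp only [mem_preimage, AffineMap.lineMap_apply_ring, mem_Ici]
    exact add_nonneg (mul_nonneg (sub_nonneg.mpr ht.2) ha) (mul_nonneg ht.1 hb)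

theorem hasDerivAt_mul_log_segment (hab : a = 0 → b = 0) :
    HasDerivAt (fun t => ((1 - t) * a + t * b) * log ((1 - t) * a + t * b))
      ((b - a) * (log a + 1)) 0 := by
  rcases eq_or_ne a 0 with rfl | ha
  · simp [hab rfl, hasDerivAt_const]
  · have h_seg : HasDerivAt (fun t : ℝ => (1 - t) * a + t * b) (b - a) 0 :=
      (((hasDerivAt_id (0 : ℝ)).const_sub 1).mul_const a).fun_add
        ((hasDerivAt_id (0 : ℝ)).mul_const b) |>.congr_deriv (by ring)
    rw [mul_comm]
    exact (hasDerivAt_mul_log ha).comp_of_eq 0 h_seg (by simp)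

theorem slope_mul_log_segment_mem_Icc (ha : 0 ≤ a) (hb : 0 ≤ b) (hab : a = 0 → b = 0)
    {t : ℝ} (ht : t ∈ Ioc 0 1) :
    slope (fun t => ((1 - t) * a + t * b) * log ((1 - t) * a + t * b)) 0 t ∈
      Icc ((b - a) * (log a + 1)) (b * log b - a * log a) := by
  have h_conv := convexOn_mul_log_segment ha hb
  have h0 : (0 : ℝ) ∈ Icc 0 1 := left_mem_Icc.mpr zero_le_one
  refine ⟨h_conv.le_slope_of_hasDerivAt h0 (Ioc_subset_Icc_self ht) ht.1
    (hasDerivAt_mul_log_segment hab), ?_⟩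
  have h_mono := h_conv.slope_mono h0 ⟨Ioc_subset_Icc_self ht, ht.1.ne'⟩
    ⟨right_mem_Icc.mpr zero_le_one, one_ne_zero⟩ ht.2
  simpa [slope_def_field] using h_mono

end Real

theorem relativeEntropy_hasDerivWithinAt_segment_general
    {X : Type*} [MeasurableSpace X]
    (μ₀ : Measure X)
    (f₀ f₁ : X → ℝ)
    (hf₀0 : ∀ x, 0 ≤ f₀ x) (hf₁0 : ∀ x, 0 ≤ f₁ x)
    (hf₀i : Integrable f₀ μ₀) (hf₁i : Integrable f₁ μ₀)
    (hf₀1 : ∫ x, f₀ x ∂μ₀ = 1) (hf₁1 : ∫ x, f₁ x ∂μ₀ = 1)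
    (hD₀ : Integrable (fun x => f₀ x * Real.log (f₀ x)) μ₀)
    (hD₁ : Integrable (fun x => f₁ x * Real.log (f₁ x)) μ₀)
    (habs : ∀ᵐ x ∂μ₀, f₀ x = 0 → f₁ x = 0)
    (hint : Integrable (fun x => (f₁ x - f₀ x) * Real.log (f₀ x)) μ₀) :
    HasDerivWithinAt
      (fun t : ℝ => ∫ x, ((1 - t) * f₀ x + t * f₁ x) *
        Real.log ((1 - t) * f₀ x + t * f₁ x) ∂μ₀)
      (∫ x, (f₁ x - f₀ x) * Real.log (f₀ x) ∂μ₀) (Set.Ici 0) 0 := by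
  set L : X → ℝ := fun x => (f₁ x - f₀ x) * (Real.log (f₀ x) + 1)
  set U : X → ℝ := fun x => f₁ x * Real.log (f₁ x) - f₀ x * Real.log (f₀ x)
  have h_sub_int : Integrable (fun x => f₁ x - f₀ x) μ₀ := hf₁i.sub hf₀i
  have hL_int : Integrable L μ₀ := by
    simpa only [L, mul_add, mul_one] using hint.fun_add h_sub_int
  have h_integral_L : ∫ x, L x ∂μ₀ = ∫ x, (f₁ x - f₀ x) * Real.log (f₀ x) ∂μ₀ := by
    simp only [L, mul_add, mul_one]
    rw [integral_add hint h_sub_int, integral_sub hf₁i hf₀i, hf₀1, hf₁1, sub_self,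
      add_zero]
  have h_slope : ∀ᶠ t in 𝓝[>] 0, ∀ᵐ x ∂μ₀, slope (fun t => ((1 - t) * f₀ x + t * f₁ x) *
      Real.log ((1 - t) * f₀ x + t * f₁ x)) 0 t ∈ Icc (L x) (U x) := by
    filter_upwards [Ioc_mem_nhdsGT zero_lt_one] with t ht
    filter_upwards [habs] with x hx
    exact Real.slope_mul_log_segment_mem_Icc (hf₀0 x) (hf₁0 x) hx ht
  have hf₀m := hf₀i.aemeasurable
  have hf₁m := hf₁i.aemeasurable
  rw [← h_integral_L]
  refine hasDerivWithinAt_integral_Ici_of_dominated_slope (bound := fun x => |L x| + |U x|)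
    (.of_forall fun t => by fun_prop) (by simpa using hD₀) ?_ (hL_int.abs.add (hD₁.sub hD₀).abs)
    (habs.mono fun x hx => (Real.hasDerivAt_mul_log_segment hx).hasDerivWithinAt)
  filter_upwards [h_slope] with t ht
  filter_upwards [ht] with x hx
  exact (abs_le_max_abs_abs hx.1 hx.2).trans (max_le_add_of_nonneg (abs_nonneg _) (abs_nonneg _))

/-- Derivative formula for the relative entropy along an affine segment of probability
measures: if `μ⁰, μ¹ ≪ μ₀` have densities `f₀, f₁` with finite relative entropies,
`f₁ = 0` a.e. on `{f₀ = 0}`, and `(f₁ − f₀)·log f₀` is `μ₀`-integrable, then the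
right derivative at `t = 0` of `t ↦ D_{μ₀}((1−t)μ⁰ + tμ¹)` equals
`∫ (f₁ − f₀)·log f₀ dμ₀`. Here `D_{μ₀}(μ^t)` is expressed through the density
`(1−t)f₀ + tf₁` of `μ^t` with respect to `μ₀`. -/
theorem relativeEntropy_hasDerivWithinAt_segment
    {X : Type*} [MeasurableSpace X]
    (μ₀ : Measure X) [IsProbabilityMeasure μ₀]
    (f₀ f₁ : X → ℝ) (hf₀m : Measurable f₀) (hf₁m : Measurable f₁)
    (hf₀0 : ∀ x, 0 ≤ f₀ x) (hf₁0 : ∀ x, 0 ≤ f₁ x)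
    (hf₀i : Integrable f₀ μ₀) (hf₁i : Integrable f₁ μ₀)
    (hf₀1 : ∫ x, f₀ x ∂μ₀ = 1) (hf₁1 : ∫ x, f₁ x ∂μ₀ = 1)
    (hD₀ : Integrable (fun x => f₀ x * Real.log (f₀ x)) μ₀)
    (hD₁ : Integrable (fun x => f₁ x * Real.log (f₁ x)) μ₀)
    (habs : ∀ᵐ x ∂μ₀, f₀ x = 0 → f₁ x = 0)
    (hint : Integrable (fun x => (f₁ x - f₀ x) * Real.log (f₀ x)) μ₀) :
    HasDerivWithinAt
      (fun t : ℝ => ∫ x, ((1 - t) * f₀ x + t * f₁ x) *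
        Real.log ((1 - t) * f₀ x + t * f₁ x) ∂μ₀)
      (∫ x, (f₁ x - f₀ x) * Real.log (f₀ x) ∂μ₀) (Set.Ici 0) 0 :=
  relativeEntropy_hasDerivWithinAt_segment_general μ₀ f₀ f₁ hf₀0 hf₁0 hf₀i hf₁i hf₀1 hf₁1 hD₀ hD₁
    habs hint
end

section
/- Let μ₀ be a probability measure on a measurable space X, let γ > 0, and let u, v : X → ℝ be measurable functions such that for some ε > 0 one has ∫_X e^{−γ(u + t·v)} dμ₀ < ∞ for all t ∈ [0, ε), and such that v·e^{−γu} is μ₀-integrable. Define L(t) := −(1/γ)·log ∫_X e^{−γ(u + t·v)} dμ₀ for t ∈ [0, ε). Then the right derivative of L at t = 0 exists and equals (∫_X v·e^{−γu} dμ₀) / (∫_X e^{−γu} dμ₀). -/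
/-!
For each `x`, the map `t ↦ e^{-γ(u x + t v x)}` is convex, so its difference quotients at `0` are
monotone in `t`: on `(0, t₀]` they lie between the derivative `-γ v e^{-γu}` and the quotient at
`t₀`, both integrable. Dominated convergence then differentiates `t ↦ ∫ e^{-γ(u + t v)} dμ₀` from
the right at `0`, and the chain rule through `log` gives the formula.
-/

open MeasureTheory Set Filter Topology

lemma ConvexOn.abs_slope_le {S : Set ℝ} {f : ℝ → ℝ} {f' a c t : ℝ} (hf : ConvexOn ℝ S f)
    (ha : a ∈ S) (hc : c ∈ S) (hat : a < t) (htc : t ≤ c)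
    (hf' : HasDerivWithinAt f f' (Ioi a) a) :
    |slope f a t| ≤ max |f'| |slope f a c| := by
  have ht : t ∈ S := hf.1.ordConnected.out ha hc ⟨hat.le, htc⟩
  exact abs_le_max_abs_abs (hf.le_slope_of_hasDerivWithinAt_Ioi ha ht hat hf')
    (hf.slope_mono ha ⟨ht, hat.ne'⟩ ⟨hc, (hat.trans_le htc).ne'⟩ htc)

theorem hasDerivWithinAt_integral_of_convexOn {X : Type*} [MeasurableSpace X] {μ : Measure X}
    {F : ℝ → X → ℝ} {F' : X → ℝ} {a b : ℝ} (hab : a < b)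
    (hconv : ∀ᵐ x ∂μ, ConvexOn ℝ (Ico a b) (F · x))
    (hderiv : ∀ᵐ x ∂μ, HasDerivWithinAt (F · x) (F' x) (Ioi a) a)
    (hint : ∀ t ∈ Ico a b, Integrable (F t) μ) (hF' : Integrable F' μ) :
    HasDerivWithinAt (fun t ↦ ∫ x, F t x ∂μ) (∫ x, F' x ∂μ) (Ici a) a := by
  obtain ⟨c, hac, hcb⟩ := exists_between hab
  have ha : a ∈ Ico a b := ⟨le_rfl, hab⟩
  have hc : c ∈ Ico a b := ⟨hac.le, hcb⟩
  have hslope_int : ∀ t ∈ Ico a b, Integrable (fun x ↦ slope (F · x) a t) μ := fun t ht ↦ by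
    simpa only [slope_def_field, Pi.sub_apply] using
      ((hint t ht).sub (hint a ha)).div_const (t - a)
  have hnear : Ioc a c ∈ 𝓝[>] a := Ioc_mem_nhdsGT hac
  rw [← hasDerivWithinAt_Ioi_iff_Ici, hasDerivWithinAt_iff_tendsto_slope' self_notMem_Ioi]
  refine (tendsto_integral_filter_of_dominated_convergence
      (fun x ↦ max |F' x| |slope (F · x) a c|) ?_ ?_ (hF'.abs.sup (hslope_int c hc).abs)
      (hderiv.mono fun x hx ↦ (hasDerivWithinAt_iff_tendsto_slope' self_notMem_Ioi).1 hx)).congr' ?_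
  · filter_upwards [hnear] with t ht
    exact (hslope_int t ⟨ht.1.le, ht.2.trans_lt hcb⟩).aestronglyMeasurable
  · filter_upwards [hnear] with t ht
    filter_upwards [hconv, hderiv] with x hx hx'
    exact hx.abs_slope_le ha hc ht.1 ht.2 hx'
  · filter_upwards [hnear] with t ht
    simp only [slope_def_field, integral_div,
      integral_sub (hint t ⟨ht.1.le, ht.2.trans_lt hcb⟩) (hint a ha)]

lemma convexOn_exp_neg_mul_add (γ a b : ℝ) :
    ConvexOn ℝ univ fun t ↦ Real.exp (-γ * (a + t * b)) := by
  let g : ℝ →ᵃ[ℝ] ℝ := (LinearMap.mul ℝ ℝ (-γ * b)).toAffineMap + AffineMap.const ℝ ℝ (-γ * a)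
  have hg (t : ℝ) : g t = -γ * (a + t * b) := by
    simp only [g, AffineMap.coe_add, Pi.add_apply, LinearMap.coe_toAffineMap,
      LinearMap.mul_apply_apply, AffineMap.coe_const, Function.const_apply]
    ring
  simpa only [preimage_univ, Function.comp_def, hg] using convexOn_exp.comp_affineMap g

lemma hasDerivAt_exp_neg_mul_add (γ a b : ℝ) :
    HasDerivAt (fun t ↦ Real.exp (-γ * (a + t * b))) (-γ * (b * Real.exp (-γ * a))) 0 := by
  convert ((((hasDerivAt_id' (0 : ℝ)).mul_const b).const_add a).const_mul (-γ)).exp using 1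
  simp only [neg_mul, zero_mul, add_zero, one_mul, mul_neg, neg_inj]
  ring

theorem hasDerivWithinAt_logExpFunctional_general
    {X : Type*} [MeasurableSpace X]
    (μ₀ : Measure X) [IsProbabilityMeasure μ₀]
    (γ : ℝ) (hγ : 0 < γ)
    (u v : X → ℝ)
    (ε : ℝ) (hε : 0 < ε)
    (hint : ∀ t ∈ Set.Ico (0 : ℝ) ε,
      Integrable (fun x => Real.exp (-γ * (u x + t * v x))) μ₀)
    (hvi : Integrable (fun x => v x * Real.exp (-γ * u x)) μ₀) :
    HasDerivWithinAt
      (fun t : ℝ =>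
        -(1 / γ) * Real.log (∫ x, Real.exp (-γ * (u x + t * v x)) ∂μ₀))
      ((∫ x, v x * Real.exp (-γ * u x) ∂μ₀) / (∫ x, Real.exp (-γ * u x) ∂μ₀))
      (Set.Ici 0) 0 := by
  have hZ := hasDerivWithinAt_integral_of_convexOn hε
    (ae_of_all _ fun x ↦ (convexOn_exp_neg_mul_add γ (u x) (v x)).subset (subset_univ _)
      (convex_Ico 0 ε))
    (ae_of_all _ fun x ↦ (hasDerivAt_exp_neg_mul_add γ (u x) (v x)).hasDerivWithinAt)
    hint (hvi.const_mul (-γ))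
  have hZ_pos : 0 < ∫ x, Real.exp (-γ * (u x + 0 * v x)) ∂μ₀ :=
    integral_exp_pos (hint 0 ⟨le_rfl, hε⟩)
  refine ((hZ.log hZ_pos.ne').const_mul (-(1 / γ))).congr_deriv ?_
  simp only [integral_const_mul, zero_mul, add_zero]
  field_simp

/-- Derivative formula for `𝓛_γ⁻` along an affine segment: if
`∫ e^{−γ(u+tv)} dμ₀ < ∞` for `t ∈ [0, ε)` and `v·e^{−γu}` is `μ₀`-integrable, then
`t ↦ −(1/γ)·log ∫ e^{−γ(u+tv)} dμ₀` has right derivative at `t = 0` equal to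
`(∫ v·e^{−γu} dμ₀) / (∫ e^{−γu} dμ₀)`. -/
theorem hasDerivWithinAt_logExpFunctional
    {X : Type*} [MeasurableSpace X]
    (μ₀ : Measure X) [IsProbabilityMeasure μ₀]
    (γ : ℝ) (hγ : 0 < γ)
    (u v : X → ℝ) (hu : Measurable u) (hv : Measurable v)
    (ε : ℝ) (hε : 0 < ε)
    (hint : ∀ t ∈ Set.Ico (0 : ℝ) ε,
      Integrable (fun x => Real.exp (-γ * (u x + t * v x))) μ₀)
    (hvi : Integrable (fun x => v x * Real.exp (-γ * u x)) μ₀) :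
    HasDerivWithinAt
      (fun t : ℝ =>
        -(1 / γ) * Real.log (∫ x, Real.exp (-γ * (u x + t * v x)) ∂μ₀))
      ((∫ x, v x * Real.exp (-γ * u x) ∂μ₀) / (∫ x, Real.exp (-γ * u x) ∂μ₀))
      (Set.Ici 0) 0 :=
  hasDerivWithinAt_logExpFunctional_general μ₀ γ hγ u v ε hε hint hvi
end

section
/- Let μ₀ be a probability measure on a measurable space X, and let μ⁰, μ¹ be probability measures on X absolutely continuous with respect to μ₀, with densities f₀ = dμ⁰/dμ₀ and f₁ = dμ¹/dμ₀ and finite relative entropies D_{μ₀}(μ⁰) < ∞ and D_{μ₀}(μ¹) < ∞. Assume f₁ = 0 μ₀-almost everywhere on {f₀ = 0} and that (f₁ − f₀)·log f₀ is μ₀-integrable. Then D_{μ₀}(μ¹) ≥ D_{μ₀}(μ⁰) + ∫_X (f₁ − f₀)·log f₀ dμ₀ (the gradient inequality for the relative entropy along the affine segment from μ⁰ to μ¹, which the paper derives from the derivative formula for D together with its convexity). -/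
open MeasureTheory Real

/-! Pointwise, `log (f₀ / f₁) ≤ f₀ / f₁ - 1` gives `f₁ - f₀ ≤ f₁ log f₁ - f₁ log f₀` wherever `f₁ > 0`;
integrating and using `∫ f₀ = ∫ f₁` yields `∫ f₁ log f₀ ≤ ∫ f₁ log f₁`, and the left-hand side of the
theorem is exactly `∫ f₁ log f₀`. -/

lemma Real.sub_le_mul_log_sub_mul_log {a b : ℝ} (ha : 0 ≤ a) (hb : 0 ≤ b) (hab : b = 0 → a = 0) :
    a - b ≤ a * log a - a * log b := by
  rcases ha.eq_or_lt with rfl | ha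
  · simpa using hb
  have hb : 0 < b := hb.lt_of_ne fun h ↦ ha.ne' (hab h.symm)
  have hlog : log b - log a ≤ b / a - 1 := by
    rw [← log_div hb.ne' ha.ne']
    exact log_le_sub_one_of_pos (div_pos hb ha)
  have hscaled := mul_le_mul_of_nonneg_left hlog ha.le
  rw [mul_sub, mul_sub_one, mul_div_cancel₀ b ha.ne'] at hscaled
  linarith

theorem MeasureTheory.integral_sub_le_integral_mul_log_sub {X : Type*} [MeasurableSpace X]
    {μ : Measure X} {f g : X → ℝ} (hf : 0 ≤ᵐ[μ] f) (hg : 0 ≤ᵐ[μ] g)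
    (habs : ∀ᵐ x ∂μ, g x = 0 → f x = 0) (hfi : Integrable f μ) (hgi : Integrable g μ)
    (hflogf : Integrable (fun x ↦ f x * log (f x)) μ)
    (hflogg : Integrable (fun x ↦ f x * log (g x)) μ) :
    ∫ x, f x ∂μ - ∫ x, g x ∂μ ≤ ∫ x, f x * log (f x) ∂μ - ∫ x, f x * log (g x) ∂μ := by
  rw [← integral_sub hfi hgi, ← integral_sub hflogf hflogg]
  refine integral_mono_ae (hfi.sub hgi) (hflogf.sub hflogg) ?_
  filter_upwards [hf, hg, habs] with x hfx hgx hx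
  exact sub_le_mul_log_sub_mul_log hfx hgx hx

theorem relativeEntropy_gradient_inequality_general
    {X : Type*} [MeasurableSpace X]
    (μ₀ : Measure X)
    (f₀ f₁ : X → ℝ)
    (hf₀0 : ∀ x, 0 ≤ f₀ x) (hf₁0 : ∀ x, 0 ≤ f₁ x)
    (hf₀i : Integrable f₀ μ₀) (hf₁i : Integrable f₁ μ₀)
    (hf₀1 : ∫ x, f₀ x ∂μ₀ = 1) (hf₁1 : ∫ x, f₁ x ∂μ₀ = 1)
    (hD₀ : Integrable (fun x => f₀ x * Real.log (f₀ x)) μ₀)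
    (hD₁ : Integrable (fun x => f₁ x * Real.log (f₁ x)) μ₀)
    (habs : ∀ᵐ x ∂μ₀, f₀ x = 0 → f₁ x = 0)
    (hint : Integrable (fun x => (f₁ x - f₀ x) * Real.log (f₀ x)) μ₀) :
    ∫ x, f₀ x * Real.log (f₀ x) ∂μ₀ + ∫ x, (f₁ x - f₀ x) * Real.log (f₀ x) ∂μ₀ ≤
      ∫ x, f₁ x * Real.log (f₁ x) ∂μ₀ := by
  have hcross : ∫ x, f₀ x * log (f₀ x) ∂μ₀ + ∫ x, (f₁ x - f₀ x) * log (f₀ x) ∂μ₀ =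
      ∫ x, f₁ x * log (f₀ x) ∂μ₀ := by
    rw [← integral_add hD₀ hint]
    congr with x
    ring
  have hcross_int : Integrable (fun x ↦ f₁ x * log (f₀ x)) μ₀ := by
    refine (hD₀.add hint).congr (ae_of_all _ fun x ↦ ?_)
    simp only [Pi.add_apply]
    ring
  have gibbs := integral_sub_le_integral_mul_log_sub (ae_of_all _ hf₁0) (ae_of_all _ hf₀0)
    habs hf₁i hf₀i hD₁ hcross_int
  rw [hf₀1, hf₁1, sub_self] at gibbs
  linarith

/-- Gradient inequality for the relative entropy: under the same hypotheses as the
derivative formula for `t ↦ D_{μ₀}((1−t)μ⁰ + tμ¹)`, one has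
`D_{μ₀}(μ¹) ≥ D_{μ₀}(μ⁰) + ∫ (f₁ − f₀)·log f₀ dμ₀`,
where `f₀, f₁` are the densities of `μ⁰, μ¹` with respect to `μ₀`. -/
theorem relativeEntropy_gradient_inequality
    {X : Type*} [MeasurableSpace X]
    (μ₀ : Measure X) [IsProbabilityMeasure μ₀]
    (f₀ f₁ : X → ℝ) (hf₀m : Measurable f₀) (hf₁m : Measurable f₁)
    (hf₀0 : ∀ x, 0 ≤ f₀ x) (hf₁0 : ∀ x, 0 ≤ f₁ x)
    (hf₀i : Integrable f₀ μ₀) (hf₁i : Integrable f₁ μ₀)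
    (hf₀1 : ∫ x, f₀ x ∂μ₀ = 1) (hf₁1 : ∫ x, f₁ x ∂μ₀ = 1)
    (hD₀ : Integrable (fun x => f₀ x * Real.log (f₀ x)) μ₀)
    (hD₁ : Integrable (fun x => f₁ x * Real.log (f₁ x)) μ₀)
    (habs : ∀ᵐ x ∂μ₀, f₀ x = 0 → f₁ x = 0)
    (hint : Integrable (fun x => (f₁ x - f₀ x) * Real.log (f₀ x)) μ₀) :
    ∫ x, f₀ x * Real.log (f₀ x) ∂μ₀ + ∫ x, (f₁ x - f₀ x) * Real.log (f₀ x) ∂μ₀ ≤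
      ∫ x, f₁ x * Real.log (f₁ x) ∂μ₀ :=
  relativeEntropy_gradient_inequality_general μ₀ f₀ f₁ hf₀0 hf₁0 hf₀i hf₁i hf₀1 hf₁1 hD₀ hD₁ habs
    hint
end

section
/- Let X be a compact metric space, μ₀ and μ Borel probability measures on X, and γ > 0. Let u : X → ℝ be an upper semicontinuous function with ∫_X e^{−γu} dμ₀ < ∞ and with u integrable with respect to μ. Suppose that μ is the Gibbs measure of u, i.e. μ is absolutely continuous with respect to μ₀ with density e^{−γu} / ∫_X e^{−γu} dμ₀. Then the supremum over w ∈ C(X) of N(w) := −(1/γ)·log ∫_X e^{−γw} dμ₀ − ∫_X w dμ is attained by u, i.e. sup_{w ∈ C(X)} N(w) = −(1/γ)·log ∫_X e^{−γu} dμ₀ − ∫_X u dμ. -/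
/-!
Write `μ` as the tilt of `μ₀` by `-γu`. For any `w`, Jensen's inequality for `exp` under `μ`,
applied to `γ(u - w)`, gives `N(w) ≤ N(u)` (Gibbs' variational inequality). Conversely, the
Pasch–Hausdorff envelopes of `u` are Lipschitz, lie above `u` and decrease to it pointwise, so by
dominated convergence there are continuous `w ≥ u` with `∫ w dμ` arbitrarily close to `∫ u dμ`;
as `𝓛_γ⁻` is monotone, `N(w)` is then arbitrarily close to `N(u)`.
-/

open MeasureTheory Filter Topology Real Set
open scoped NNReal

lemma EReal.iSup_coe_eq_of_forall_le_of_forall_lt_exists_gt {ι : Sort*} {f : ι → ℝ} {a : ℝ}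
    (h_le : ∀ i, f i ≤ a) (h_gt : ∀ b < a, ∃ i, b < f i) : ⨆ i, (f i : EReal) = a := by
  refine iSup_eq_of_forall_le_of_forall_lt_exists_gt (fun i => EReal.coe_le_coe (h_le i))
    fun c hc => ?_
  obtain ⟨b, hcb, hba⟩ := EReal.lt_iff_exists_real_btwn.1 hc
  obtain ⟨i, hi⟩ := h_gt b (EReal.coe_lt_coe_iff.1 hba)
  exact ⟨i, hcb.trans (EReal.coe_lt_coe hi)⟩

section Gibbs

variable {α : Type*} [MeasurableSpace α]

/-- The functional `𝓛_γ⁻`, a smoothed minimum of `w` at inverse temperature `γ`. -/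
noncomputable def softMin (ν : Measure α) (γ : ℝ) (w : α → ℝ) : ℝ :=
  -(1 / γ) * log (∫ x, exp (-γ * w x) ∂ν)

variable {ν : Measure α} [NeZero ν]

lemma integral_sub_le_log_integral_exp_div {f g : α → ℝ}
    (hf : Integrable (fun x => exp (f x)) ν) (hg : Integrable (fun x => exp (g x)) ν)
    (hfi : Integrable f (ν.tilted f)) (hgi : Integrable g (ν.tilted f)) :
    ∫ x, (g x - f x) ∂(ν.tilted f) ≤ log ((∫ x, exp (g x) ∂ν) / ∫ x, exp (f x) ∂ν) := by
  have := isProbabilityMeasure_tilted hf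
  have hexp : Integrable (fun x => exp (g x - f x)) (ν.tilted f) := by
    refine (integrable_tilted_iff hf _).2 (hg.congr (.of_forall fun x => ?_))
    simp [← exp_add]
  have jensen : exp (∫ x, (g x - f x) ∂(ν.tilted f)) ≤ ∫ x, exp (g x - f x) ∂(ν.tilted f) :=
    convexOn_exp.map_integral_le continuous_exp.continuousOn isClosed_univ
      (.of_forall fun _ => mem_univ _) (hgi.sub hfi) hexp
  have h_tilt : ∫ x, exp (g x - f x) ∂(ν.tilted f) =
      (∫ x, exp (g x) ∂ν) / ∫ x, exp (f x) ∂ν :=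
    (integral_exp_tilted f (g - f)).trans (by simp)
  rw [h_tilt] at jensen
  exact (le_log_iff_exp_le (div_pos (integral_exp_pos hg) (integral_exp_pos hf))).2 jensen

lemma softMin_mono {γ : ℝ} (hγ : 0 ≤ γ) {u w : α → ℝ}
    (hu : Integrable (fun x => exp (-γ * u x)) ν) (hw : Integrable (fun x => exp (-γ * w x)) ν)
    (huw : u ≤ w) : softMin ν γ u ≤ softMin ν γ w := by
  have h_int : ∫ x, exp (-γ * w x) ∂ν ≤ ∫ x, exp (-γ * u x) ∂ν :=
    integral_mono hw hu fun x => exp_le_exp.2 (by nlinarith [huw x])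
  have h_log := log_le_log (integral_exp_pos hw) h_int
  unfold softMin
  nlinarith [one_div_nonneg.2 hγ]

lemma softMin_sub_integral_tilted_le {γ : ℝ} (hγ : 0 < γ) {u w : α → ℝ}
    (hu : Integrable (fun x => exp (-γ * u x)) ν) (hw : Integrable (fun x => exp (-γ * w x)) ν)
    (hui : Integrable u (ν.tilted fun x => -γ * u x))
    (hwi : Integrable w (ν.tilted fun x => -γ * u x)) :
    softMin ν γ w - ∫ x, w x ∂(ν.tilted fun x => -γ * u x) ≤
      softMin ν γ u - ∫ x, u x ∂(ν.tilted fun x => -γ * u x) := by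
  set μ := ν.tilted fun x => -γ * u x
  have h := integral_sub_le_log_integral_exp_div hu hw (hui.const_mul (-γ)) (hwi.const_mul (-γ))
  have h_int : ∫ x, (-γ * w x - -γ * u x) ∂μ = γ * (∫ x, u x ∂μ - ∫ x, w x ∂μ) := by
    rw [← integral_sub hui hwi, ← integral_const_mul]
    congr 1 with x
    ring
  rw [h_int, log_div (integral_exp_pos hw).ne' (integral_exp_pos hu).ne', ← le_div_iff₀' hγ,
    sub_div] at h
  unfold softMin
  linarith [one_div_mul_eq_div γ (log (∫ x, exp (-γ * w x) ∂ν)),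
    one_div_mul_eq_div γ (log (∫ x, exp (-γ * u x) ∂ν))]

end Gibbs

section SupConvolution

variable {X : Type*} [PseudoMetricSpace X] {u : X → ℝ} {M : ℝ}

/-- The Pasch–Hausdorff envelope of `u`; for `u` bounded above it is the least `K`-Lipschitz
function above `u`. -/
noncomputable def supConv (u : X → ℝ) (K : ℝ≥0) (x : X) : ℝ :=
  ⨆ y, u y - K * dist x y

lemma bddAbove_range_sub_mul_dist (hM : ∀ y, u y ≤ M) (K : ℝ≥0) (x : X) :
    BddAbove (range fun y => u y - K * dist x y) :=
  ⟨M, forall_mem_range.2 fun y => by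
    have := mul_nonneg K.coe_nonneg (dist_nonneg (x := x) (y := y))
    linarith [hM y]⟩

lemma le_supConv (hM : ∀ y, u y ≤ M) (K : ℝ≥0) (x : X) : u x ≤ supConv u K x := by
  simpa [supConv] using le_ciSup (bddAbove_range_sub_mul_dist hM K x) x

lemma supConv_le (hM : ∀ y, u y ≤ M) (K : ℝ≥0) (x : X) : supConv u K x ≤ M :=
  haveI : Nonempty X := ⟨x⟩
  ciSup_le fun y => by
    have := mul_nonneg K.coe_nonneg (dist_nonneg (x := x) (y := y))
    linarith [hM y]

lemma lipschitzWith_supConv (hM : ∀ y, u y ≤ M) (K : ℝ≥0) : LipschitzWith K (supConv u K) :=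
  LipschitzWith.of_le_add_mul K fun x x' =>
    haveI : Nonempty X := ⟨x⟩
    ciSup_le fun y => by
      have h : u y - K * dist x' y ≤ supConv u K x' :=
        le_ciSup (bddAbove_range_sub_mul_dist hM K x') y
      have := mul_le_mul_of_nonneg_left (dist_triangle x' x y) K.coe_nonneg
      rw [dist_comm x' x] at this
      linarith

lemma UpperSemicontinuous.tendsto_supConv (hu : UpperSemicontinuous u) (hM : ∀ y, u y ≤ M)
    (x : X) : Tendsto (fun K => supConv u K x) atTop (𝓝 (u x)) := by
  refine tendsto_order.2 ⟨fun a ha => .of_forall fun K => ha.trans_le (le_supConv hM K x),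
    fun b hb => ?_⟩
  obtain ⟨c, hxc, hcb⟩ := exists_between hb
  obtain ⟨r, hr, hball⟩ := Metric.eventually_nhds_iff.1 (hu x c hxc)
  filter_upwards [eventually_ge_atTop ((M - c) / r).toNNReal] with K hK
  have : Nonempty X := ⟨x⟩
  refine (ciSup_le fun y => ?_).trans_lt hcb
  have hKr : M - c ≤ K * r := by
    have := (div_le_iff₀ hr).1 (Real.toNNReal_le_iff_le_coe.1 hK)
    linarith
  rcases lt_or_ge (dist y x) r with hyx | hyx
  · have := mul_nonneg K.coe_nonneg (dist_nonneg (x := x) (y := y))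
    linarith [hball hyx]
  · have := mul_le_mul_of_nonneg_left (dist_comm x y ▸ hyx) K.coe_nonneg
    linarith [hM y]

end SupConvolution

lemma UpperSemicontinuous.exists_continuous_ge_integral_le {X : Type*} [PseudoMetricSpace X]
    [MeasurableSpace X] [OpensMeasurableSpace X] {μ : Measure X} [IsFiniteMeasure μ]
    {u : X → ℝ} (hu : UpperSemicontinuous u) (hbdd : BddAbove (range u)) (hui : Integrable u μ)
    {ε : ℝ} (hε : 0 < ε) :
    ∃ w : C(X, ℝ), u ≤ w ∧ ∫ x, w x ∂μ ≤ ∫ x, u x ∂μ + ε := by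
  obtain ⟨M, hM⟩ := hbdd
  replace hM : ∀ y, u y ≤ M := fun y => hM (mem_range_self y)
  have hlim : Tendsto (fun n : ℕ => ∫ x, supConv u n x ∂μ) atTop (𝓝 (∫ x, u x ∂μ)) := by
    refine tendsto_integral_of_dominated_convergence (fun x => |u x| + |M|)
      (fun n => (lipschitzWith_supConv hM n).continuous.aestronglyMeasurable)
      (hui.abs.add (integrable_const _)) (fun n => .of_forall fun x => ?_)
      (.of_forall fun x => (hu.tendsto_supConv hM x).comp tendsto_natCast_atTop_atTop)
    rw [Real.norm_eq_abs, abs_le]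
    constructor <;> linarith [le_supConv hM n x, supConv_le hM n x, neg_abs_le (u x),
      le_abs_self M, abs_nonneg (u x), abs_nonneg M]
  obtain ⟨n, hn⟩ := (hlim.eventually_lt_const (lt_add_of_pos_right _ hε)).exists
  exact ⟨⟨supConv u n, (lipschitzWith_supConv hM n).continuous⟩, le_supConv hM n, hn.le⟩

theorem gibbs_measure_attains_sup_general
    {X : Type*} [MetricSpace X] [CompactSpace X]
    [MeasurableSpace X] [BorelSpace X]
    (μ₀ μ : Measure X) [IsProbabilityMeasure μ₀]
    (γ : ℝ) (hγ : 0 < γ) (u : X → ℝ) (husc : UpperSemicontinuous u)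
    (hexp : Integrable (fun x => Real.exp (-γ * u x)) μ₀)
    (hui : Integrable u μ)
    (hgibbs : μ = μ₀.withDensity (fun x =>
      ENNReal.ofReal (Real.exp (-γ * u x) / ∫ y, Real.exp (-γ * u y) ∂μ₀))) :
    (⨆ w : C(X, ℝ),
        ((-(1 / γ) * Real.log (∫ x, Real.exp (-γ * w x) ∂μ₀)
            - ∫ x, w x ∂μ : ℝ) : EReal)) =
      ((-(1 / γ) * Real.log (∫ x, Real.exp (-γ * u x) ∂μ₀)
          - ∫ x, u x ∂μ : ℝ) : EReal) := by
  obtain rfl : μ = μ₀.tilted fun x => -γ * u x := hgibbs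
  set μ := μ₀.tilted fun x => -γ * u x
  have : IsProbabilityMeasure μ := isProbabilityMeasure_tilted hexp
  have h_int {ν : Measure X} [IsFiniteMeasure ν] {f : X → ℝ} (hf : Continuous f) :
      Integrable f ν :=
    hf.integrable_of_hasCompactSupport (.of_compactSpace f)
  have h_exp_int (w : C(X, ℝ)) : Integrable (fun x => exp (-γ * w x)) μ₀ := h_int (by fun_prop)
  refine EReal.iSup_coe_eq_of_forall_le_of_forall_lt_exists_gt
    (f := fun w : C(X, ℝ) => softMin μ₀ γ w - ∫ x, w x ∂μ) (a := softMin μ₀ γ u - ∫ x, u x ∂μ)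
    (fun w => softMin_sub_integral_tilted_le hγ hexp (h_exp_int w) hui (h_int w.continuous))
    fun b hb => ?_
  have h_bdd : BddAbove (range u) := by
    simpa using (husc.upperSemicontinuousOn univ).bddAbove_of_isCompact isCompact_univ
  obtain ⟨w, huw, hw⟩ := husc.exists_continuous_ge_integral_le h_bdd hui (half_pos (sub_pos.2 hb))
  refine ⟨w, ?_⟩
  have := softMin_mono hγ.le hexp (h_exp_int w) huw
  linarith

/-- If `μ` is the Gibbs measure of `u`, i.e. `dμ = e^{−γu}/(∫ e^{−γu} dμ₀) dμ₀`,
then the supremum over continuous `w` of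
`N(w) = −(1/γ)·log ∫ e^{−γw} dμ₀ − ∫ w dμ` equals the value of the same expression
evaluated at the upper semicontinuous function `u`. -/
theorem gibbs_measure_attains_sup
    {X : Type*} [MetricSpace X] [CompactSpace X]
    [MeasurableSpace X] [BorelSpace X]
    (μ₀ μ : Measure X) [IsProbabilityMeasure μ₀] [IsProbabilityMeasure μ]
    (γ : ℝ) (hγ : 0 < γ) (u : X → ℝ) (husc : UpperSemicontinuous u)
    (hexp : Integrable (fun x => Real.exp (-γ * u x)) μ₀)
    (hui : Integrable u μ)
    (hgibbs : μ = μ₀.withDensity (fun x =>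
      ENNReal.ofReal (Real.exp (-γ * u x) / ∫ y, Real.exp (-γ * u y) ∂μ₀))) :
    (⨆ w : C(X, ℝ),
        ((-(1 / γ) * Real.log (∫ x, Real.exp (-γ * w x) ∂μ₀)
            - ∫ x, w x ∂μ : ℝ) : EReal)) =
      ((-(1 / γ) * Real.log (∫ x, Real.exp (-γ * u x) ∂μ₀)
          - ∫ x, u x ∂μ : ℝ) : EReal) :=
  gibbs_measure_attains_sup_general μ₀ μ γ hγ u husc hexp hui hgibbs
end

section
/- Let X be a compact metric space, μ₀ and μ Borel probability measures on X, and γ > 0. Let u : X → ℝ be an upper semicontinuous function with ∫_X e^{−γu} dμ₀ < ∞ and with u integrable with respect to μ. Suppose that sup_{w ∈ C(X)} N(w) = −(1/γ)·log ∫_X e^{−γu} dμ₀ − ∫_X u dμ, where N(w) := −(1/γ)·log ∫_X e^{−γw} dμ₀ − ∫_X w dμ. Then μ is the Gibbs measure of u: μ is absolutely continuous with respect to μ₀ with density e^{−γu} / ∫_X e^{−γu} dμ₀. -/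
/-!
Put `ψ = -γ u`, so that `N(w) = γ⁻¹ (∫ -γw dμ - log ∫ e^{-γw} dμ₀)` and the hypothesis says that
`ψ` maximises the Donsker–Varadhan functional `φ ↦ ∫ φ dμ - log ∫ e^φ dμ₀` over continuous `φ`.
Approximating the lower semicontinuous `ψ + s f` from below by Lipschitz inf-convolutions extends
this to `ψ + s f` for every bounded continuous `f` and `s ∈ ℝ`. Against the tilted measure
`ν = e^ψ μ₀ / ∫ e^ψ dμ₀` the inequality reads `s ∫ f dμ ≤ log ∫ e^{s f} dν`, an inequality between
functions of `s` that is an equality at `s = 0`; comparing derivatives there gives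
`∫ f dμ = ∫ f dν`, hence `μ = ν`.
-/

open MeasureTheory ProbabilityTheory Filter Topology Set Real
open scoped NNReal

noncomputable def lipschitzMinorant {X : Type*} [PseudoMetricSpace X] (ψ : X → ℝ) (K : ℝ≥0)
    (x : X) : ℝ :=
  ⨅ y, ψ y + K * dist x y

section lipschitzMinorant

variable {X : Type*} [PseudoMetricSpace X] {ψ : X → ℝ} {m : ℝ}

lemma bddBelow_range_add_mul_dist (hm : ∀ y, m ≤ ψ y) (K : ℝ≥0) (x : X) :
    BddBelow (range fun y => ψ y + K * dist x y) :=
  ⟨m, forall_mem_range.2 fun y => le_add_of_le_of_nonneg (hm y) (by positivity)⟩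

lemma lipschitzMinorant_le_add_mul_dist (hm : ∀ y, m ≤ ψ y) (K : ℝ≥0) (x y : X) :
    lipschitzMinorant ψ K x ≤ ψ y + K * dist x y :=
  ciInf_le (bddBelow_range_add_mul_dist hm K x) y

lemma lipschitzMinorant_le (hm : ∀ y, m ≤ ψ y) (K : ℝ≥0) (x : X) :
    lipschitzMinorant ψ K x ≤ ψ x := by
  simpa using lipschitzMinorant_le_add_mul_dist hm K x x

lemma le_lipschitzMinorant (hm : ∀ y, m ≤ ψ y) (K : ℝ≥0) (x : X) :
    m ≤ lipschitzMinorant ψ K x :=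
  have : Nonempty X := ⟨x⟩
  le_ciInf fun y => le_add_of_le_of_nonneg (hm y) (by positivity)

lemma lipschitzWith_lipschitzMinorant (hm : ∀ y, m ≤ ψ y) (K : ℝ≥0) :
    LipschitzWith K (lipschitzMinorant ψ K) := by
  refine LipschitzWith.of_le_add_mul K fun x x' => ?_
  have : Nonempty X := ⟨x⟩
  rw [← sub_le_iff_le_add]
  refine le_ciInf fun y => ?_
  have := lipschitzMinorant_le_add_mul_dist hm K x y
  have := mul_le_mul_of_nonneg_left (dist_triangle x x' y) K.coe_nonneg
  linarith

lemma tendsto_lipschitzMinorant (hψ : LowerSemicontinuous ψ) (hm : ∀ y, m ≤ ψ y) (x : X) :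
    Tendsto (fun n : ℕ => lipschitzMinorant ψ n x) atTop (𝓝 (ψ x)) := by
  have : Nonempty X := ⟨x⟩
  refine tendsto_order.2 ⟨fun a ha => ?_, fun a ha => Eventually.of_forall fun n =>
    (lipschitzMinorant_le hm n x).trans_lt ha⟩
  obtain ⟨b, hab, hb⟩ := exists_between ha
  obtain ⟨δ, hδ, hnear⟩ := Metric.eventually_nhds_iff.1 (hψ x b hb)
  obtain ⟨N, hN⟩ := exists_nat_gt ((b - m) / δ)
  filter_upwards [eventually_ge_atTop N] with n hn
  refine hab.trans_le (le_ciInf fun y => ?_)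
  by_cases hy : dist y x < δ
  · exact le_add_of_le_of_nonneg (hnear hy).le (by positivity)
  · -- far from `x`, the penalty `n * dist x y` alone exceeds `b - m`
    have hNn : (N : ℝ) ≤ n := by exact_mod_cast hn
    have : b - m ≤ n * dist x y := by
      rw [div_lt_iff₀ hδ] at hN
      nlinarith [dist_comm x y, not_lt.1 hy]
    have := hm y
    push_cast
    linarith

end lipschitzMinorant

lemma UpperSemicontinuous.lowerSemicontinuous_const_mul_of_neg {X : Type*} [TopologicalSpace X]
    {u : X → ℝ} (hu : UpperSemicontinuous u) {c : ℝ} (hc : c < 0) :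
    LowerSemicontinuous fun x => c * u x := fun x a ha => by
  filter_upwards [hu x (a / c) ((lt_div_iff_of_neg hc).2 (by linarith))] with x' hx'
  linarith [(lt_div_iff_of_neg hc).1 hx']

/-- Its supremum over `φ` is the relative entropy of `μ` with respect to `μ₀`. -/
noncomputable def donskerVaradhan {Ω : Type*} [MeasurableSpace Ω] (μ₀ μ : Measure Ω)
    (φ : Ω → ℝ) : ℝ :=
  ∫ x, φ x ∂μ - log (∫ x, exp (φ x) ∂μ₀)

section donskerVaradhan

variable {Ω : Type*} [MeasurableSpace Ω] {μ₀ μ : Measure Ω}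

lemma neg_inv_mul_log_integral_exp_sub_integral {γ : ℝ} (hγ : γ ≠ 0) (w : Ω → ℝ) :
    -(1 / γ) * log (∫ x, exp (-γ * w x) ∂μ₀) - ∫ x, w x ∂μ =
      γ⁻¹ * donskerVaradhan μ₀ μ (fun x => -γ * w x) := by
  rw [donskerVaradhan, integral_const_mul]
  field_simp
  ring

lemma integral_eq_of_mul_le_cgf {ν : Measure Ω} [IsProbabilityMeasure ν] {f : Ω → ℝ} {C a : ℝ}
    (hf : AEStronglyMeasurable f ν) (hfC : ∀ x, |f x| ≤ C) (h : ∀ s, s * a ≤ cgf f ν s) :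
    a = ∫ x, f x ∂ν := by
  have hexp : integrableExpSet f ν = univ := by
    refine eq_univ_of_forall fun s =>
      Integrable.of_bound ?_ (exp (|s| * C)) (ae_of_all _ fun x => ?_)
    · exact continuous_exp.comp_aestronglyMeasurable (hf.const_mul s)
    · rw [Real.norm_eq_abs, abs_exp]
      exact exp_le_exp.2 ((le_abs_self _).trans (by rw [abs_mul]; gcongr; exact hfC x))
  have h0 : 0 ∈ interior (integrableExpSet f ν) := by simp [hexp]
  have hderiv : HasDerivAt (fun s => cgf f ν s - s * a) (∫ x, f x ∂ν - a) 0 := by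
    have := (analyticAt_cgf h0).differentiableAt.hasDerivAt
    rw [deriv_cgf_zero h0, probReal_univ, div_one] at this
    exact this.sub (hasDerivAt_mul_const a)
  have hmin : IsLocalMin (fun s => cgf f ν s - s * a) 0 :=
    Eventually.of_forall fun s => by simpa [cgf_zero] using h s
  linarith [hmin.hasDerivAt_eq_zero hderiv]

lemma integrable_exp_add_mul_of_abs_le {ψ f : Ω → ℝ} {C : ℝ}
    (hψ : Integrable (fun x => exp (ψ x)) μ₀) (hf : AEStronglyMeasurable f μ₀)
    (hfC : ∀ x, |f x| ≤ C) (s : ℝ) :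
    Integrable (fun x => exp (ψ x + s * f x)) μ₀ := by
  simp_rw [exp_add]
  refine hψ.mul_bdd (c := exp (|s| * C)) (continuous_exp.comp_aestronglyMeasurable
    (hf.const_mul s)) (ae_of_all _ fun x => ?_)
  rw [Real.norm_eq_abs, abs_exp, exp_le_exp]
  exact (le_abs_self _).trans (by rw [abs_mul]; gcongr; exact hfC x)

lemma donskerVaradhan_add_mul [NeZero μ₀] [IsFiniteMeasure μ] {ψ f : Ω → ℝ} {C : ℝ}
    (hψ : Integrable (fun x => exp (ψ x)) μ₀) (hψμ : Integrable ψ μ)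
    (hf : Measurable f) (hfC : ∀ x, |f x| ≤ C) (s : ℝ) :
    donskerVaradhan μ₀ μ (fun x => ψ x + s * f x) =
      donskerVaradhan μ₀ μ ψ + s * ∫ x, f x ∂μ - cgf f (μ₀.tilted ψ) s := by
  have hint := integrable_exp_add_mul_of_abs_le hψ hf.aestronglyMeasurable hfC s
  have hfμ : Integrable f μ := .of_bound hf.aestronglyMeasurable C (ae_of_all _ (hfC ·))
  rw [cgf, mgf, integral_exp_tilted]
  simp only [Pi.add_apply]
  rw [log_div (integral_exp_pos hint).ne' (integral_exp_pos hψ).ne', donskerVaradhan,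
    donskerVaradhan, integral_add hψμ (hfμ.const_mul s), integral_const_mul]
  ring

theorem integral_eq_integral_tilted_of_forall_donskerVaradhan_le [NeZero μ₀] [IsFiniteMeasure μ]
    {ψ f : Ω → ℝ} {C : ℝ} (hψ : Integrable (fun x => exp (ψ x)) μ₀) (hψμ : Integrable ψ μ)
    (hf : Measurable f) (hfC : ∀ x, |f x| ≤ C)
    (hmax : ∀ s : ℝ, donskerVaradhan μ₀ μ (fun x => ψ x + s * f x) ≤ donskerVaradhan μ₀ μ ψ) :
    ∫ x, f x ∂μ = ∫ x, f x ∂(μ₀.tilted ψ) := by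
  have := isProbabilityMeasure_tilted hψ
  refine integral_eq_of_mul_le_cgf hf.aestronglyMeasurable hfC fun s => ?_
  have := hmax s
  rw [donskerVaradhan_add_mul hψ hψμ hf hfC] at this
  linarith

lemma donskerVaradhan_le_of_tendsto [NeZero μ₀] {φ : ℕ → Ω → ℝ} {ψ : Ω → ℝ} {c : ℝ}
    (hφψ : ∀ n x, φ n x ≤ ψ x) (hφ : ∀ n, Integrable (fun x => exp (φ n x)) μ₀)
    (hψ : Integrable (fun x => exp (ψ x)) μ₀)
    (hlim : Tendsto (fun n => ∫ x, φ n x ∂μ) atTop (𝓝 (∫ x, ψ x ∂μ)))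
    (hc : ∀ n, donskerVaradhan μ₀ μ (φ n) ≤ c) :
    donskerVaradhan μ₀ μ ψ ≤ c := by
  refine le_of_tendsto' (hlim.sub_const (log (∫ x, exp (ψ x) ∂μ₀))) fun n => (hc n).trans' ?_
  have : log (∫ x, exp (φ n x) ∂μ₀) ≤ log (∫ x, exp (ψ x) ∂μ₀) :=
    log_le_log (integral_exp_pos (hφ n))
      (integral_mono (hφ n) hψ fun x => exp_le_exp.2 (hφψ n x))
  rw [donskerVaradhan]
  linarith

end donskerVaradhan

section continuous

variable {X : Type*} [MeasurableSpace X] {μ₀ μ : Measure X}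

lemma donskerVaradhan_le_of_iSup_le [TopologicalSpace X] {γ : ℝ} (hγ : 0 < γ) {u : X → ℝ}
    (hsup : (⨆ w : C(X, ℝ),
        ((-(1 / γ) * log (∫ x, exp (-γ * w x) ∂μ₀) - ∫ x, w x ∂μ : ℝ) : EReal)) ≤
      ((-(1 / γ) * log (∫ x, exp (-γ * u x) ∂μ₀) - ∫ x, u x ∂μ : ℝ) : EReal))
    (φ : C(X, ℝ)) :
    donskerVaradhan μ₀ μ φ ≤ donskerVaradhan μ₀ μ (fun x => -γ * u x) := by
  simp_rw [neg_inv_mul_log_integral_exp_sub_integral hγ.ne'] at hsup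
  have h := (le_iSup _ (-γ⁻¹ • φ)).trans hsup
  simp only [EReal.coe_le_coe_iff, ContinuousMap.smul_apply, smul_eq_mul, ← mul_assoc,
    neg_mul_neg, mul_inv_cancel₀ hγ.ne', one_mul] at h
  exact le_of_mul_le_mul_left h (inv_pos.2 hγ)

theorem donskerVaradhan_le_of_forall_continuous [PseudoMetricSpace X] [CompactSpace X]
    [BorelSpace X] [IsFiniteMeasure μ₀] [NeZero μ₀] [IsFiniteMeasure μ] {c : ℝ}
    (hc : ∀ φ : C(X, ℝ), donskerVaradhan μ₀ μ φ ≤ c) {ψ : X → ℝ}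
    (hψ : LowerSemicontinuous ψ) (hψμ : Integrable ψ μ)
    (hexp : Integrable (fun x => exp (ψ x)) μ₀) :
    donskerVaradhan μ₀ μ ψ ≤ c := by
  obtain ⟨m, hm⟩ : BddBelow (range ψ) := by
    simpa [image_univ] using (hψ.lowerSemicontinuousOn univ).bddBelow_of_isCompact isCompact_univ
  replace hm : ∀ y, m ≤ ψ y := fun y => hm (mem_range_self y)
  let φ : ℕ → C(X, ℝ) := fun n =>
    ⟨lipschitzMinorant ψ n, (lipschitzWith_lipschitzMinorant hm n).continuous⟩
  refine donskerVaradhan_le_of_tendsto (φ := fun n => φ n) (fun n => lipschitzMinorant_le hm n)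
    (fun n => ?_) hexp ?_ (fun n => hc (φ n))
  · exact (BoundedContinuousFunction.mkOfCompact
      ((⟨exp, continuous_exp⟩ : C(ℝ, ℝ)).comp (φ n))).integrable μ₀
  · exact tendsto_integral_of_dominated_convergence (fun x => max |m| |ψ x|)
      (fun n => (φ n).continuous.aestronglyMeasurable) ((integrable_const _).sup hψμ.abs)
      (fun n => ae_of_all _ fun x =>
        abs_le_max_abs_abs (le_lipschitzMinorant hm n x) (lipschitzMinorant_le hm n x))
      (ae_of_all _ (tendsto_lipschitzMinorant hψ hm))

end continuous

/-- Converse direction: if the supremum over continuous `w` of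
`N(w) = −(1/γ)·log ∫ e^{−γw} dμ₀ − ∫ w dμ` equals the value of the same expression
evaluated at the upper semicontinuous function `u`, then `μ` is the Gibbs measure of
`u`, i.e. `μ` is absolutely continuous with respect to `μ₀` with density
`e^{−γu}/(∫ e^{−γu} dμ₀)`. -/
theorem sup_attained_implies_gibbs_measure
    {X : Type*} [MetricSpace X] [CompactSpace X]
    [MeasurableSpace X] [BorelSpace X]
    (μ₀ μ : Measure X) [IsProbabilityMeasure μ₀] [IsProbabilityMeasure μ]
    (γ : ℝ) (hγ : 0 < γ) (u : X → ℝ) (husc : UpperSemicontinuous u)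
    (hexp : Integrable (fun x => Real.exp (-γ * u x)) μ₀)
    (hui : Integrable u μ)
    (hsup : (⨆ w : C(X, ℝ),
        ((-(1 / γ) * Real.log (∫ x, Real.exp (-γ * w x) ∂μ₀)
            - ∫ x, w x ∂μ : ℝ) : EReal)) =
      ((-(1 / γ) * Real.log (∫ x, Real.exp (-γ * u x) ∂μ₀)
          - ∫ x, u x ∂μ : ℝ) : EReal)) :
    μ = μ₀.withDensity (fun x =>
      ENNReal.ofReal (Real.exp (-γ * u x) / ∫ y, Real.exp (-γ * u y) ∂μ₀)) := by
  have hψ : LowerSemicontinuous fun x => -γ * u x :=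
    husc.lowerSemicontinuous_const_mul_of_neg (neg_lt_zero.2 hγ)
  have hψμ : Integrable (fun x => -γ * u x) μ := hui.const_mul _
  have hmax := donskerVaradhan_le_of_iSup_le hγ hsup.le
  change μ = μ₀.tilted fun x => -γ * u x
  refine ext_of_forall_integral_eq_of_IsFiniteMeasure fun f => ?_
  have hfC : ∀ x, |f x| ≤ ‖f‖ := f.norm_coe_le_norm
  refine integral_eq_integral_tilted_of_forall_donskerVaradhan_le hexp hψμ f.continuous.measurable
    hfC fun s => donskerVaradhan_le_of_forall_continuous hmax
      (hψ.add (continuous_const.mul f.continuous).lowerSemicontinuous)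
      (hψμ.add ((f.integrable μ).const_mul s))
      (integrable_exp_add_mul_of_abs_le hexp f.continuous.aestronglyMeasurable hfC s)
end
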